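/- arXiv:math/0412174 — 3 statements merged into one kernel-verified Lean document; each statement's English description precedes it below -/
import Mathlib

section
/- Fix an integer $\mathsf{d} \ge 1$, set $\alpha = (2^{\mathsf{d}}+1)^{-1}$, and fix $0 \le b < \mathsf{d}$. Then the shifted dyadic collection $\mathcal{D}_{\mathsf{d},b,\alpha} = \{2^{k\mathsf{d}+b}((0,1) + j + (-1)^k \alpha) : k \in \mathbb{Z}, j \in \mathbb{Z}\}$ is a grid: for any two intervals $I, I'$ in the collection, $I \cap I' \in \{\emptyset, I, I'\}$. -/
open Set

/-- The shifted dyadic interval `2^{kd+b}((0,1) + j + (-1)^k α)`. -/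
def shiftedI (d b : ℕ) (α : ℝ) (k j : ℤ) : Set ℝ :=
  Set.Ioo ((2:ℝ) ^ (k * (d:ℤ) + (b:ℤ)) * ((j:ℝ) + (-1:ℝ) ^ k * α))
          ((2:ℝ) ^ (k * (d:ℤ) + (b:ℤ)) * (1 + (j:ℝ) + (-1:ℝ) ^ k * α))

/-- Sign cast: `(-1:ℝ)^k` for `k : ℤ` is an integer sign. -/
lemma sign_int (k : ℤ) : ∃ s : ℤ, (s : ℝ) = (-1:ℝ) ^ k := by
  rcases Int.even_or_odd k with h | h
  · exact ⟨1, by rw [h.neg_one_zpow]; norm_num⟩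
  · exact ⟨-1, by rw [h.neg_one_zpow]; norm_num⟩

/-- Endpoints of coarser intervals are endpoints of finer intervals. -/
lemma endpoint (d b : ℕ) (k k' : ℤ) (h : k' ≤ k) (m : ℤ) :
    ∃ m' : ℤ, (2:ℝ) ^ (k * (d:ℤ) + (b:ℤ)) * ((m:ℝ) + (-1:ℝ) ^ k * ((2:ℝ) ^ d + 1)⁻¹)
      = (2:ℝ) ^ (k' * (d:ℤ) + (b:ℤ)) * ((m':ℝ) + (-1:ℝ) ^ k' * ((2:ℝ) ^ d + 1)⁻¹) := by
  obtain ⟨s, hs⟩ := sign_int k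
  set n : ℕ := (k - k').toNat with hn
  have hnk : (n : ℤ) = k - k' := Int.toNat_of_nonneg (by omega)
  obtain ⟨c, hc⟩ := sub_dvd_pow_sub_pow ((2:ℤ) ^ d) (-1) n
  have hc' : ((2:ℤ)^d)^n - (-1)^n = ((2:ℤ)^d + 1) * c := by
    rw [hc]; ring
  refine ⟨2 ^ (d * n) * m + s * c, ?_⟩
  have h2 : (0:ℝ) < (2:ℝ) ^ d + 1 := by positivity
  have hsplit : (2:ℝ) ^ (k * (d:ℤ) + (b:ℤ))
      = (2:ℝ) ^ (k' * (d:ℤ) + (b:ℤ)) * (2:ℝ) ^ (d * n : ℕ) := by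
    rw [← zpow_natCast (2:ℝ) (d * n), ← zpow_add₀ (by norm_num : (2:ℝ) ≠ 0)]
    congr 1
    push_cast
    rw [hnk]; ring
  have hek' : (-1:ℝ) ^ k' = (-1:ℝ) ^ k * (-1:ℝ) ^ n := by
    have : k' = k - (n : ℤ) := by omega
    rw [this, zpow_sub₀ (by norm_num : (-1:ℝ) ≠ 0), zpow_natCast]
    rcases Nat.even_or_odd n with hpar | hpar
    · rw [hpar.neg_one_pow]; field_simp
    · rw [hpar.neg_one_pow]; field_simp
  have hcr : ((2:ℝ)^d)^n - (-1:ℝ)^n = ((2:ℝ)^d + 1) * (c:ℝ) := by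
    exact_mod_cast congrArg (fun z : ℤ => (z : ℝ)) hc'
  rw [hsplit, hek']
  have hinv : ((2:ℝ)^d + 1) * ((2:ℝ)^d + 1)⁻¹ = 1 := mul_inv_cancel₀ (ne_of_gt h2)
  push_cast
  rw [mul_assoc]
  congr 1
  have hpow : (2:ℝ) ^ (d * n : ℕ) = ((2:ℝ)^d)^n := by rw [pow_mul]
  rw [hpow, ← hs]
  have key : ((2:ℝ)^d)^n * ((s:ℝ) * ((2:ℝ)^d + 1)⁻¹) - (s:ℝ) * (-1:ℝ)^n * ((2:ℝ)^d + 1)⁻¹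
      = (s:ℝ) * c := by
    have : ((2:ℝ)^d)^n * ((s:ℝ) * ((2:ℝ)^d + 1)⁻¹) - (s:ℝ) * (-1:ℝ)^n * ((2:ℝ)^d + 1)⁻¹
        = (s:ℝ) * ((((2:ℝ)^d)^n - (-1:ℝ)^n) * ((2:ℝ)^d + 1)⁻¹) := by ring
    rw [this, hcr]; field_simp
  linarith [key]

/-- Nesting lemma: a finer interval is contained in or disjoint from a coarser one. -/
lemma key_nest (d b : ℕ) (k k' j j' : ℤ) (h : k' ≤ k) :
    shiftedI d b ((2 ^ d + 1 : ℝ)⁻¹) k' j' ∩ shiftedI d b ((2 ^ d + 1 : ℝ)⁻¹) k j = ∅ ∨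
    shiftedI d b ((2 ^ d + 1 : ℝ)⁻¹) k' j' ⊆ shiftedI d b ((2 ^ d + 1 : ℝ)⁻¹) k j := by
  set A : ℝ := ((2:ℝ) ^ d + 1)⁻¹ with hA
  set E : ℤ → ℝ := fun m => (2:ℝ) ^ (k' * (d:ℤ) + (b:ℤ)) * ((m:ℝ) + (-1:ℝ) ^ k' * A) with hE
  have hp : (0:ℝ) < (2:ℝ) ^ (k' * (d:ℤ) + (b:ℤ)) := by positivity
  have hEmono : ∀ x y : ℤ, x ≤ y → E x ≤ E y := by
    intro x y hxy
    have : (x:ℝ) ≤ (y:ℝ) := by exact_mod_cast hxy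
    exact mul_le_mul_of_nonneg_left (by linarith) (le_of_lt hp)
  obtain ⟨a, ha⟩ := endpoint d b k k' h j
  obtain ⟨c, hc⟩ := endpoint d b k k' h (j + 1)
  rw [← hA] at ha hc
  have hIl : shiftedI d b A k j = Set.Ioo (E a) (E c) := by
    unfold shiftedI
    simp only [hE]
    rw [← ha, ← hc]
    congr 1
    push_cast
    ring
  have hI' : shiftedI d b A k' j' = Set.Ioo (E j') (E (j' + 1)) := by
    unfold shiftedI
    simp only [hE]
    congr 1
    push_cast
    ring
  rw [hIl, hI']
  rcases le_or_gt c j' with hcj | hcj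
  · left
    apply Set.eq_empty_iff_forall_notMem.mpr
    rintro x ⟨⟨hx1, _⟩, ⟨_, hx4⟩⟩
    have := hEmono c j' hcj
    linarith
  · rcases le_or_gt (j' + 1) a with haj | haj
    · left
      apply Set.eq_empty_iff_forall_notMem.mpr
      rintro x ⟨⟨_, hx2⟩, ⟨hx3, _⟩⟩
      have := hEmono (j' + 1) a haj
      linarith
    · right
      exact Set.Ioo_subset_Ioo (hEmono a j' (by omega)) (hEmono (j' + 1) c (by omega))

/-- For integer `d ≥ 1`, `α = (2^d+1)⁻¹` and `0 ≤ b < d`, the collection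
`𝒟_{d,b,α} = {2^{kd+b}((0,1)+j+(-1)^k α) : k, j ∈ ℤ}` is a grid: any two of its members
intersect in the empty set or one of the two intervals. -/
theorem stmt_1 (d : ℕ) (hd : 1 ≤ d) (b : ℕ) (hb : b < d) :
    ∀ I ∈ {S : Set ℝ | ∃ k j : ℤ, S = shiftedI d b ((2 ^ d + 1 : ℝ)⁻¹) k j},
    ∀ J ∈ {S : Set ℝ | ∃ k j : ℤ, S = shiftedI d b ((2 ^ d + 1 : ℝ)⁻¹) k j},
      I ∩ J = ∅ ∨ I ∩ J = I ∨ I ∩ J = J := by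
  rintro I ⟨k, j, rfl⟩ J ⟨k', j', rfl⟩
  rcases le_total k' k with h | h
  · rcases key_nest d b k k' j j' h with hE | hS
    · left; rw [Set.inter_comm]; exact hE
    · right; right; exact Set.inter_eq_right.mpr hS
  · rcases key_nest d b k' k j' j h with hE | hS
    · left; exact hE
    · right; left; exact Set.inter_eq_left.mpr hS
end

section
/- Fix an integer $\mathsf{d} \ge 1$ and let $\delta = (2^{\mathsf{d}}+1)^{-1}$. For every dyadic interval $I \in \mathcal{D}$, both translates $I + \delta|I|$ and $I - \delta|I|$ belong to the collection $\mathcal{D}_{\mathsf{d}} = \bigcup_{\alpha \in \{\pm(2^{\mathsf{d}}+1)^{-1}\}} \bigcup_{b=0}^{\mathsf{d}-1} \mathcal{D}_{\mathsf{d},b,\alpha}$. -/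
open Set

/-- The full shifted dyadic collection `𝒟_d`: the union over both choices of sign
`α ∈ {±(2^d+1)⁻¹}` and shifts `0 ≤ b < d` of the grids `𝒟_{d,b,α}`. -/
def Dd (d : ℕ) : Set (Set ℝ) :=
  {S | ∃ b : ℕ, b < d ∧ ∃ ε : ℝ, (ε = 1 ∨ ε = -1) ∧
    ∃ k j : ℤ, S = shiftedI d b (ε * (2 ^ d + 1 : ℝ)⁻¹) k j}

lemma stmt_2_aux (d : ℕ) (hd : 1 ≤ d) (j k : ℤ) (ε δ : ℝ) (hε : ε = 1 ∨ ε = -1) :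
    ∃ b : ℕ, b < d ∧ ∃ ε' : ℝ, (ε' = 1 ∨ ε' = -1) ∧ ∃ k' j' : ℤ,
      Set.Ioo ((j:ℝ) * 2 ^ k + ε * δ * 2 ^ k) (((j:ℝ) + 1) * 2 ^ k + ε * δ * 2 ^ k)
        = shiftedI d b (ε' * δ) k' j' := by
  have hd0 : (0:ℤ) < (d:ℤ) := by exact_mod_cast hd
  set k' : ℤ := k / d with hk'
  set b : ℕ := (k % d).toNat with hb
  have hmod0 : 0 ≤ k % d := Int.emod_nonneg k (by omega)
  have hbz : (b:ℤ) = k % d := Int.toNat_of_nonneg hmod0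
  have hblt : b < d := by
    have := Int.emod_lt_of_pos k hd0
    omega
  have hk : k' * (d:ℤ) + (b:ℤ) = k := by
    rw [hbz, hk', mul_comm]; exact Int.mul_ediv_add_emod k d
  have hpow : ((-1:ℝ)) ^ k' = 1 ∨ ((-1:ℝ)) ^ k' = -1 := by
    rcases Int.even_or_odd k' with h | h
    · exact Or.inl (Even.neg_one_zpow h)
    · exact Or.inr (Odd.neg_one_zpow h)
  refine ⟨b, hblt, ε * (-1:ℝ) ^ k', ?_, k', j, ?_⟩
  · rcases hε with rfl | rfl <;> rcases hpow with h | h <;> simp [h]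
  · have h1 : ((-1:ℝ)) ^ k' * ((-1:ℝ)) ^ k' = 1 := by
      rcases hpow with h | h <;> rw [h] <;> norm_num
    have key : ((-1:ℝ)) ^ k' * (ε * ((-1:ℝ)) ^ k' * δ) = ε * δ := by
      calc ((-1:ℝ)) ^ k' * (ε * ((-1:ℝ)) ^ k' * δ)
          = (((-1:ℝ)) ^ k' * ((-1:ℝ)) ^ k') * (ε * δ) := by ring
        _ = ε * δ := by rw [h1]; ring
    unfold shiftedI
    rw [hk, key]
    congr 1 <;> ring

/-- With `δ = (2^d+1)⁻¹`, for every dyadic interval `I = (j2^k, (j+1)2^k)`,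
both translates `I + δ|I|` and `I - δ|I|` belong to `𝒟_d`. -/
theorem stmt_2 (d : ℕ) (hd : 1 ≤ d) (j k : ℤ) :
    Set.Ioo ((j:ℝ) * 2 ^ k + (2 ^ d + 1 : ℝ)⁻¹ * 2 ^ k)
        (((j:ℝ) + 1) * 2 ^ k + (2 ^ d + 1 : ℝ)⁻¹ * 2 ^ k) ∈ Dd d ∧
    Set.Ioo ((j:ℝ) * 2 ^ k - (2 ^ d + 1 : ℝ)⁻¹ * 2 ^ k)
        (((j:ℝ) + 1) * 2 ^ k - (2 ^ d + 1 : ℝ)⁻¹ * 2 ^ k) ∈ Dd d := by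
  constructor
  · have h := stmt_2_aux d hd j k 1 ((2 ^ d + 1 : ℝ)⁻¹) (Or.inl rfl)
    simpa [Dd, one_mul] using h
  · have h := stmt_2_aux d hd j k (-1) ((2 ^ d + 1 : ℝ)⁻¹) (Or.inr rfl)
    have e : ∀ a : ℝ, a + (-1) * (2 ^ d + 1 : ℝ)⁻¹ * 2 ^ k
        = a - (2 ^ d + 1 : ℝ)⁻¹ * 2 ^ k := by intro a; ring
    rw [e, e] at h
    simpa [Dd] using h
end

section
/- Fix an integer $\mathsf{d} \ge 1$ and let $\delta = (2^{\mathsf{d}}+1)^{-1}$. There is an absolute constant $K$ such that for every measurable set $U \subset \mathbb{R}$ of finite measure, $|\{x : M^{\mathcal{D}_{\mathsf{d}}} \mathbf{1}_U(x) > 1-\delta\}| \le (1 + K\delta\mathsf{d})\,|U|$. -/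
open MeasureTheory Set
open scoped ENNReal

lemma div_key (d t : ℕ) : ∃ q : ℤ, (-1)^t * 2^(t*d) - 1 = ((2:ℤ)^d + 1) * q := by
  induction t with
  | zero => exact ⟨0, by simp⟩
  | succ t ih =>
    obtain ⟨q, hq⟩ := ih
    exact ⟨-2^d * q - 1, by linear_combination (-(2:ℤ)^d) * hq⟩

lemma vol_shiftedI (d b : ℕ) (α : ℝ) (k j : ℤ) :
    volume (shiftedI d b α k j) = ENNReal.ofReal ((2:ℝ) ^ (k * (d:ℤ) + (b:ℤ))) := by
  rw [shiftedI, Real.volume_Ioo]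
  congr 1; ring

lemma shiftedI_nonempty (d b : ℕ) (α : ℝ) (k j : ℤ) : (shiftedI d b α k j).Nonempty := by
  rw [shiftedI, nonempty_Ioo]
  have h : (0:ℝ) < (2:ℝ) ^ (k * (d:ℤ) + (b:ℤ)) := zpow_pos (by norm_num) _
  nlinarith [h]

lemma key (d b : ℕ) (εz : ℤ) (k : ℤ) (t : ℕ) (j' : ℤ) :
    ∃ m : ℤ, (2:ℝ)^(t*d) * ((j':ℝ) + (-1:ℝ)^(k + (t:ℤ)) * ((εz:ℝ) * ((2:ℝ)^d+1)⁻¹))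
      = (m:ℝ) + (-1:ℝ)^k * ((εz:ℝ) * ((2:ℝ)^d+1)⁻¹) := by
  obtain ⟨q, hq⟩ := div_key d t
  have hqr : ((-1:ℝ)^t * 2^(t*d) - 1) = ((2:ℝ)^d + 1) * q := by exact_mod_cast congrArg (Int.cast : ℤ → ℝ) hq
  have hsplit : (-1:ℝ)^(k + (t:ℤ)) = (-1:ℝ)^k * (-1:ℝ)^t := by
    rw [zpow_add₀ (by norm_num : (-1:ℝ) ≠ 0), zpow_natCast]
  have hP : ((2:ℝ)^d + 1) ≠ 0 := by positivity
  rcases Int.even_or_odd k with hk | hk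
  · have hs : (-1:ℝ)^k = 1 := hk.neg_one_zpow
    refine ⟨2^(t*d) * j' + εz * q, ?_⟩
    rw [hsplit, hs]
    push_cast
    field_simp
    linear_combination (εz:ℝ) * hqr
  · have hs : (-1:ℝ)^k = -1 := hk.neg_one_zpow
    refine ⟨2^(t*d) * j' - εz * q, ?_⟩
    rw [hsplit, hs]
    push_cast
    field_simp
    linear_combination (-(εz:ℝ)) * hqr

lemma nest (d b : ℕ) (εz : ℤ) (k k' j j' : ℤ) (hkk : k ≤ k')
    (hne : (shiftedI d b ((εz:ℝ) * ((2:ℝ)^d+1)⁻¹) k j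
      ∩ shiftedI d b ((εz:ℝ) * ((2:ℝ)^d+1)⁻¹) k' j').Nonempty) :
    shiftedI d b ((εz:ℝ) * ((2:ℝ)^d+1)⁻¹) k j ⊆ shiftedI d b ((εz:ℝ) * ((2:ℝ)^d+1)⁻¹) k' j' := by
  set α : ℝ := (εz:ℝ) * ((2:ℝ)^d+1)⁻¹ with hα
  obtain ⟨t, ht⟩ : ∃ t : ℕ, k' = k + (t:ℤ) := ⟨(k'-k).toNat, by omega⟩
  subst ht
  obtain ⟨m, hm⟩ := key d b εz k t j'
  set H : ℝ := (2:ℝ) ^ (k * (d:ℤ) + (b:ℤ)) with hH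
  have hHpos : 0 < H := zpow_pos (by norm_num) _
  set c : ℝ := (-1:ℝ)^k * α with hc
  have hpow : (2:ℝ) ^ ((k + (t:ℤ)) * (d:ℤ) + (b:ℤ)) = H * 2^(t*d) := by
    rw [hH, ← zpow_natCast (2:ℝ) (t*d), ← zpow_add₀ (by norm_num : (2:ℝ) ≠ 0)]
    congr 1
    push_cast
    ring
  have e1 : (2:ℝ) ^ ((k + (t:ℤ)) * (d:ℤ) + (b:ℤ)) * ((j':ℝ) + (-1:ℝ)^(k + (t:ℤ)) * α)
      = H * ((m:ℝ) + c) := by rw [hpow, mul_assoc, hm]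
  have e2 : (2:ℝ) ^ ((k + (t:ℤ)) * (d:ℤ) + (b:ℤ)) * (1 + (j':ℝ) + (-1:ℝ)^(k + (t:ℤ)) * α)
      = H * ((m:ℝ) + 2^(t*d) + c) := by
    rw [hpow]
    have h5 : (H * 2^(t*d)) * (1 + (j':ℝ) + (-1:ℝ)^(k + (t:ℤ)) * α)
        = H * ((2:ℝ)^(t*d) * ((j':ℝ) + (-1:ℝ)^(k + (t:ℤ)) * α)) + H * 2^(t*d) := by ring
    rw [h5, hm]
    ring
  have hbig : shiftedI d b α (k + (t:ℤ)) j'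
      = Set.Ioo (H * ((m:ℝ) + c)) (H * ((m:ℝ) + 2^(t*d) + c)) := by
    rw [shiftedI, e1, e2]
  rw [hbig] at hne ⊢
  rw [shiftedI] at hne ⊢
  obtain ⟨x, ⟨hx1, hx2⟩, hx3, hx4⟩ := hne
  have h1 : (m:ℝ) + c < (1 + j + c) := by
    have := hx3.trans hx2
    have := (mul_lt_mul_iff_right₀ hHpos).mp this
    linarith
  have h2 : (j:ℝ) + c < (m:ℝ) + 2^(t*d) + c := by
    have := hx1.trans hx4
    have := (mul_lt_mul_iff_right₀ hHpos).mp this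
    linarith
  have hm1 : (m:ℝ) ≤ (j:ℝ) := by
    have : (m:ℝ) < (j:ℝ) + 1 := by linarith
    have : m < j + 1 := by exact_mod_cast this
    exact_mod_cast Int.lt_add_one_iff.mp this
  have hm2 : (1:ℝ) + (j:ℝ) ≤ (m:ℝ) + 2^(t*d) := by
    have h2' : (j:ℝ) < (m:ℝ) + ((2:ℤ)^(t*d) : ℤ) := by push_cast; linarith
    have : j < m + (2:ℤ)^(t*d) := by exact_mod_cast h2'
    have : j + 1 ≤ m + (2:ℤ)^(t*d) := this
    calc (1:ℝ) + j = ((j+1 : ℤ) : ℝ) := by push_cast; ring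
    _ ≤ ((m + (2:ℤ)^(t*d) : ℤ) : ℝ) := by exact_mod_cast this
    _ = (m:ℝ) + 2^(t*d) := by push_cast; ring
  apply Set.Ioo_subset_Ioo
  · apply mul_le_mul_of_nonneg_left _ hHpos.le
    linarith
  · apply mul_le_mul_of_nonneg_left _ hHpos.le
    linarith

lemma grid_bound (d b : ℕ) (hd : 1 ≤ d) (εz : ℤ)
    (U : Set ℝ) (hU : MeasurableSet U) (hUfin : volume U < ⊤) :
    volume ({x : ℝ | ∃ k j : ℤ, x ∈ shiftedI d b ((εz:ℝ) * ((2:ℝ)^d+1)⁻¹) k j ∧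
        ENNReal.ofReal (1 - ((2:ℝ)^d+1)⁻¹) * volume (shiftedI d b ((εz:ℝ) * ((2:ℝ)^d+1)⁻¹) k j)
          < volume (U ∩ shiftedI d b ((εz:ℝ) * ((2:ℝ)^d+1)⁻¹) k j)} \ U)
      ≤ ENNReal.ofReal ((3/2) * ((2:ℝ)^d+1)⁻¹) * volume U := by
  set α : ℝ := (εz:ℝ) * ((2:ℝ)^d+1)⁻¹ with hα
  set δ : ℝ := ((2:ℝ)^d+1)⁻¹ with hδ
  have hδpos : 0 < δ := by rw [hδ]; positivity
  have hδ3 : δ ≤ 1/3 := by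
    rw [hδ]
    rw [inv_le_comm₀ (by positivity) (by norm_num)]
    have : (2:ℝ)^1 ≤ (2:ℝ)^d := pow_le_pow_right₀ (by norm_num) hd
    norm_num at this ⊢
    linarith
  set I : ℤ × ℤ → Set ℝ := fun p => shiftedI d b α p.1 p.2 with hI
  set Bad : Set (ℤ × ℤ) := {p | ENNReal.ofReal (1 - δ) * volume (I p) < volume (U ∩ I p)}
    with hBad
  -- level bound
  obtain ⟨n, hn⟩ := exists_nat_gt ((volume U).toReal)
  have hrn : (volume U).toReal < 2^n := hn.trans_le (by exact_mod_cast (Nat.lt_two_pow_self (n := n)).le)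
  have hlev : ∀ p ∈ Bad, p.1 ≤ (n:ℤ) := by
    intro p hp
    by_contra hcon
    push_neg at hcon
    have hk1 : (n:ℤ) + 1 ≤ p.1 := hcon
    have hexp : (n:ℤ) + 1 ≤ p.1 * d + b := by
      have h1 : p.1 ≤ p.1 * d := by nlinarith [hk1, (by exact_mod_cast hd : (1:ℤ) ≤ (d:ℤ))]
      have h2 : (0:ℤ) ≤ b := Int.ofNat_nonneg b
      omega
    have hbig : (2:ℝ)^((n:ℤ)+1) ≤ (2:ℝ)^(p.1 * d + b) :=
      zpow_le_zpow_right₀ (by norm_num) hexp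
    have hvol := vol_shiftedI d b α p.1 p.2
    have hlt := hp
    rw [hBad, Set.mem_setOf_eq, hI] at hlt
    have hle : volume (U ∩ shiftedI d b α p.1 p.2) ≤ volume U :=
      measure_mono Set.inter_subset_left
    have hlt2 : ENNReal.ofReal (1 - δ) * volume (shiftedI d b α p.1 p.2) < volume U :=
      lt_of_lt_of_le hlt hle
    rw [hvol, ← ENNReal.ofReal_mul (by linarith : (0:ℝ) ≤ 1 - δ)] at hlt2
    have hUr : volume U = ENNReal.ofReal ((volume U).toReal) := by
      rw [ENNReal.ofReal_toReal hUfin.ne]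
    rw [hUr] at hlt2
    have hreal : (1 - δ) * (2:ℝ)^(p.1 * (d:ℤ) + (b:ℤ)) < (volume U).toReal :=
      (ENNReal.ofReal_lt_ofReal_iff_of_nonneg
        (mul_nonneg (by linarith) (zpow_pos (by norm_num : (0:ℝ) < 2) _).le)).mp hlt2
    have h23 : (1:ℝ)/2 ≤ 1 - δ := by linarith
    have hval : (2:ℝ)^((n:ℤ)+1) = 2 * 2^n := by
      have hcast : ((n:ℤ)+1) = ((n+1 : ℕ):ℤ) := by push_cast; ring
      rw [hcast, zpow_natCast, pow_succ]
      ring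
    nlinarith [zpow_pos (by norm_num : (0:ℝ) < 2) (p.1 * (d:ℤ) + (b:ℤ)), hreal, hbig]
  -- maximal bad intervals
  set Max : Set (ℤ × ℤ) := {p ∈ Bad | ∀ q ∈ Bad, I p ⊆ I q → I q ⊆ I p} with hMax
  have hnest : ∀ p q : ℤ × ℤ, p.1 ≤ q.1 → (I p ∩ I q).Nonempty → I p ⊆ I q := by
    intro p q h1 h2
    exact nest d b εz p.1 q.1 p.2 q.2 h1 h2
  have hclaim : ∀ nn : ℕ, ∀ p ∈ Bad, ((n:ℤ) - p.1).toNat ≤ nn →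
      ∃ q ∈ Max, I p ⊆ I q := by
    intro nn
    induction nn with
    | zero =>
      intro p hp hle
      refine ⟨p, ⟨hp, ?_⟩, subset_rfl⟩
      intro q hq hsub
      have hq1 : q.1 ≤ (n:ℤ) := hlev q hq
      have hp1 : (n:ℤ) ≤ p.1 := by omega
      apply hnest q p (by omega)
      obtain ⟨x, hx⟩ := shiftedI_nonempty d b α p.1 p.2
      exact ⟨x, hsub hx, hx⟩
    | succ nn ih =>
      intro p hp hle
      by_cases hmax : ∀ q ∈ Bad, I p ⊆ I q → I q ⊆ I p
      · exact ⟨p, ⟨hp, hmax⟩, subset_rfl⟩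
      · push_neg at hmax
        obtain ⟨q, hq, hsub, hnsub⟩ := hmax
        have hq1 : p.1 < q.1 := by
          by_contra hcon
          push_neg at hcon
          exact hnsub (hnest q p hcon
            ⟨_, hsub (shiftedI_nonempty d b α p.1 p.2).choose_spec,
              (shiftedI_nonempty d b α p.1 p.2).choose_spec⟩)
        have hqn : q.1 ≤ (n:ℤ) := hlev q hq
        obtain ⟨r, hr, hsub2⟩ := ih q hq (by omega)
        exact ⟨r, hr, hsub.trans hsub2⟩
  -- the collection of maximal intervals
  set S : Set (Set ℝ) := (fun p => I p) '' Max with hS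
  have hScnt : S.Countable := (Set.to_countable Max).image _
  haveI := hScnt.to_subtype
  have hSmeas : ∀ s ∈ S, MeasurableSet s := by
    rintro s ⟨p, -, rfl⟩
    exact measurableSet_Ioo
  have hSdisj : ∀ s ∈ S, ∀ t ∈ S, s ≠ t → Disjoint s t := by
    rintro s ⟨p, hp, rfl⟩ t ⟨q, hq, rfl⟩ hst
    by_contra hcon
    rw [Set.not_disjoint_iff_nonempty_inter] at hcon
    rcases le_total p.1 q.1 with h | h
    · have h1 : I p ⊆ I q := hnest p q h hcon
      exact hst (Set.Subset.antisymm h1 (hp.2 q hq.1 h1))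
    · have h1 : I q ⊆ I p := hnest q p h ⟨_, hcon.choose_spec.2, hcon.choose_spec.1⟩
      exact hst (Set.Subset.antisymm (hq.2 p hp.1 h1) h1)
  have hpers : ∀ s ∈ S, volume (s \ U) ≤ ENNReal.ofReal ((3/2) * δ) * volume (s ∩ U) := by
    rintro s ⟨p, hp, rfl⟩
    have hpBad : p ∈ Bad := hp.1
    rw [hBad, Set.mem_setOf_eq] at hpBad
    set a := volume (I p) with ha
    set u := volume (I p ∩ U) with hu
    have huc : volume (U ∩ I p) = u := by rw [hu, Set.inter_comm]
    rw [huc] at hpBad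
    have hafin : a ≠ ⊤ := by
      rw [ha, hI, vol_shiftedI]
      exact ENNReal.ofReal_ne_top
    have hufin : u ≠ ⊤ := fun h => hafin (top_le_iff.mp (h ▸ measure_mono Set.inter_subset_left))
    have hid : u + volume (I p \ U) = a := measure_inter_add_diff (I p) hU
    set C := ENNReal.ofReal ((3/2) * δ) with hC
    have hkey2 : a ≤ (C + 1) * u := by
      have h1 : (1:ℝ≥0∞) ≤ ENNReal.ofReal (((3/2) * δ + 1) * (1 - δ)) := by
        rw [ENNReal.one_le_ofReal]
        nlinarith [hδpos, hδ3]
      have h2 : ENNReal.ofReal (((3/2) * δ + 1) * (1 - δ))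
          = (C + 1) * ENNReal.ofReal (1 - δ) := by
        rw [ENNReal.ofReal_mul (by nlinarith [hδpos]), ENNReal.ofReal_add (by nlinarith [hδpos]) zero_le_one,
          ENNReal.ofReal_one]
      calc a = 1 * a := (one_mul a).symm
      _ ≤ ENNReal.ofReal (((3/2) * δ + 1) * (1 - δ)) * a := mul_le_mul_left h1 a
      _ = (C + 1) * (ENNReal.ofReal (1 - δ) * a) := by rw [h2, mul_assoc]
      _ ≤ (C + 1) * u := mul_le_mul_right hpBad.le _
    have h3 : u + volume (I p \ U) ≤ u + C * u := by
      rw [hid]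
      calc a ≤ (C + 1) * u := hkey2
      _ = u + C * u := by ring
    exact (ENNReal.add_le_add_iff_left hufin).mp h3
  -- put it together
  have hBsub : {x : ℝ | ∃ k j : ℤ, x ∈ shiftedI d b α k j ∧
        ENNReal.ofReal (1 - δ) * volume (shiftedI d b α k j)
          < volume (U ∩ shiftedI d b α k j)} \ U ⊆ ⋃ s : S, ((s:Set ℝ) \ U) := by
    rintro x ⟨⟨k, j, hx, hcond⟩, hxU⟩
    have hbad : ((k, j) : ℤ × ℤ) ∈ Bad := hcond
    obtain ⟨q, hqM, hsub⟩ := hclaim ((n:ℤ) - k).toNat (k, j) hbad le_rfl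
    exact Set.mem_iUnion.mpr ⟨⟨I q, ⟨q, hqM, rfl⟩⟩, hsub hx, hxU⟩
  calc volume ({x : ℝ | ∃ k j : ℤ, x ∈ shiftedI d b α k j ∧
        ENNReal.ofReal (1 - δ) * volume (shiftedI d b α k j)
          < volume (U ∩ shiftedI d b α k j)} \ U)
      ≤ volume (⋃ s : S, ((s:Set ℝ) \ U)) := measure_mono hBsub
  _ ≤ ∑' s : S, volume ((s:Set ℝ) \ U) := measure_iUnion_le _
  _ ≤ ∑' s : S, ENNReal.ofReal ((3/2) * δ) * volume ((s:Set ℝ) ∩ U) :=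
      ENNReal.tsum_le_tsum (fun s => hpers s s.2)
  _ = ENNReal.ofReal ((3/2) * δ) * ∑' s : S, volume ((s:Set ℝ) ∩ U) := ENNReal.tsum_mul_left
  _ = ENNReal.ofReal ((3/2) * δ) * volume (⋃ s : S, ((s:Set ℝ) ∩ U)) := by
      congr 1
      refine (measure_iUnion ?_ ?_).symm
      · intro s t hst
        exact Disjoint.mono Set.inter_subset_left Set.inter_subset_left
          (hSdisj s s.2 t t.2 (fun h => hst (Subtype.ext h)))
      · exact fun s => (hSmeas s s.2).inter hU
  _ ≤ ENNReal.ofReal ((3/2) * δ) * volume U := by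
      apply mul_le_mul_right
      apply measure_mono
      exact Set.iUnion_subset (fun s => Set.inter_subset_right)

/-- with `δ = (2^d+1)⁻¹`, there is an absolute constant `K` such that for every
integer `d ≥ 1` and every measurable set `U ⊆ ℝ` of finite measure,
`|{M^{𝒟_d} 1_U > 1 - δ}| ≤ (1 + Kδd)|U|`.  The superlevel set `{M^{𝒟_d} 1_U > 1-δ}` is the
set of points lying in some `I ∈ 𝒟_d` with `|U ∩ I| > (1-δ)|I|`. -/
theorem stmt_3 :
    ∃ K : ℝ, 0 < K ∧ ∀ d : ℕ, 1 ≤ d → ∀ U : Set ℝ, MeasurableSet U → volume U < ⊤ →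
      volume {x : ℝ | ∃ I ∈ Dd d, x ∈ I ∧
          ENNReal.ofReal (1 - (2 ^ d + 1 : ℝ)⁻¹) * volume I < volume (U ∩ I)}
        ≤ ENNReal.ofReal (1 + K * (2 ^ d + 1 : ℝ)⁻¹ * d) * volume U := by
  refine ⟨3, by norm_num, ?_⟩
  intro d hd U hU hUfin
  set δ : ℝ := ((2:ℝ)^d + 1)⁻¹ with hδ
  have hδpos : 0 < δ := by rw [hδ]; positivity
  set G : ℕ → ℤ → Set ℝ := fun b εz =>
    {x : ℝ | ∃ k j : ℤ, x ∈ shiftedI d b ((εz:ℝ) * ((2:ℝ)^d+1)⁻¹) k j ∧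
        ENNReal.ofReal (1 - ((2:ℝ)^d+1)⁻¹) * volume (shiftedI d b ((εz:ℝ) * ((2:ℝ)^d+1)⁻¹) k j)
          < volume (U ∩ shiftedI d b ((εz:ℝ) * ((2:ℝ)^d+1)⁻¹) k j)} with hG
  set R : Set ℝ := ⋃ b ∈ Finset.range d, ⋃ εz ∈ ({1, -1} : Finset ℤ), (G b εz \ U) with hR
  have hsub : {x : ℝ | ∃ I ∈ Dd d, x ∈ I ∧
      ENNReal.ofReal (1 - (2 ^ d + 1 : ℝ)⁻¹) * volume I < volume (U ∩ I)} ⊆ U ∪ R := by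
    rintro x ⟨I, ⟨b, hb, ε, hε, k, j, rfl⟩, hx, hcond⟩
    by_cases hxU : x ∈ U
    · exact Or.inl hxU
    refine Or.inr ?_
    rw [hR]
    rcases hε with rfl | rfl
    · refine Set.mem_biUnion (Finset.mem_range.mpr hb) ?_
      refine Set.mem_biUnion (Finset.mem_insert_self 1 {-1}) ?_
      refine ⟨⟨k, j, ?_, ?_⟩, hxU⟩
      · simpa using hx
      · simpa using hcond
    · refine Set.mem_biUnion (Finset.mem_range.mpr hb) ?_
      refine Set.mem_biUnion (Finset.mem_insert_of_mem (Finset.mem_singleton_self (-1))) ?_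
      refine ⟨⟨k, j, ?_, ?_⟩, hxU⟩
      · have : ((-1:ℤ):ℝ) = -1 := by norm_num
        rw [this]; exact hx
      · have : ((-1:ℤ):ℝ) = -1 := by norm_num
        rw [this]; exact hcond
  have hRvol : volume R ≤ ENNReal.ofReal (3 * δ * d) * volume U := by
    have h1 : volume R ≤ ∑ b ∈ Finset.range d, ∑ εz ∈ ({1, -1} : Finset ℤ),
        volume (G b εz \ U) := by
      rw [hR]
      refine (measure_biUnion_finset_le _ _).trans ?_
      exact Finset.sum_le_sum (fun b _ => measure_biUnion_finset_le _ _)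
    have h2 : ∀ b ∈ Finset.range d, ∀ εz ∈ ({1, -1} : Finset ℤ),
        volume (G b εz \ U) ≤ ENNReal.ofReal ((3/2) * δ) * volume U := by
      intro b _ εz _
      exact grid_bound d b hd εz U hU hUfin
    have h3 : volume R ≤ ∑ b ∈ Finset.range d, ∑ εz ∈ ({1, -1} : Finset ℤ),
        ENNReal.ofReal ((3/2) * δ) * volume U := by
      refine h1.trans (Finset.sum_le_sum fun b hb => Finset.sum_le_sum fun εz hεz => h2 b hb εz hεz)
    have h4 : ∑ b ∈ Finset.range d, ∑ εz ∈ ({1, -1} : Finset ℤ),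
        ENNReal.ofReal ((3/2) * δ) * volume U
        = (d : ℝ≥0∞) * (2 * (ENNReal.ofReal ((3/2) * δ) * volume U)) := by
      rw [Finset.sum_const, Finset.sum_const]
      simp [nsmul_eq_mul, mul_assoc]
    have h5 : (d : ℝ≥0∞) * (2 * (ENNReal.ofReal ((3/2) * δ) * volume U))
        = ENNReal.ofReal (3 * δ * d) * volume U := by
      rw [← mul_assoc, ← mul_assoc]
      congr 1
      rw [← ENNReal.ofReal_natCast d, ← ENNReal.ofReal_ofNat 2,
        ← ENNReal.ofReal_mul (by positivity), ← ENNReal.ofReal_mul (by positivity)]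
      congr 1
      ring
    calc volume R ≤ _ := h3
    _ = _ := h4
    _ = _ := h5
  calc volume {x : ℝ | ∃ I ∈ Dd d, x ∈ I ∧
      ENNReal.ofReal (1 - (2 ^ d + 1 : ℝ)⁻¹) * volume I < volume (U ∩ I)}
      ≤ volume (U ∪ R) := measure_mono hsub
  _ ≤ volume U + volume R := measure_union_le _ _
  _ ≤ volume U + ENNReal.ofReal (3 * δ * d) * volume U := add_le_add_right hRvol _
  _ = ENNReal.ofReal (1 + 3 * δ * d) * volume U := by
      rw [ENNReal.ofReal_add (by norm_num) (by positivity), ENNReal.ofReal_one, add_mul, one_mul]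
  _ = ENNReal.ofReal (1 + 3 * (2 ^ d + 1 : ℝ)⁻¹ * d) * volume U := by rw [hδ]
end
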